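/- Let P := ∩_{i=1}^n P_i where P_1,...,P_n ⊆ R^n are polyhedra, and call a vertex v of P 'mixed' if for every i in [n] there is a facet F_i of P_i with v ∈ F_i. In the Partition reduction (P_i for i ≤ n−1 the axis bricks and P_n the slab {(x,ξ_n) : −2·1 ≤ x ≤ 2·1, ξ_n = 1, 0 ≤ 2α·x ≤ 1} with α ∈ N^{d}, n = d+1): P has a mixed vertex if and only if there exists x ∈ {−1,1}^{d} with α·x = 0. -/

import Mathlib

/-- The axis-parallel brick `P_i` (for `i ≤ n-1`) of the Partition reduction. -/
def brickP (d : ℕ) (i : Fin d) : Set (EuclideanSpace ℝ (Fin (d + 1))) :=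
  {y | (-1 ≤ y i.castSucc ∧ y i.castSucc ≤ 1) ∧
    ∀ j : Fin (d + 1), j ≠ i.castSucc → (-2 ≤ y j ∧ y j ≤ 2)}

/-- The slab polyhedron `P_n` of the Partition reduction. -/
def slabPn (d : ℕ) (α : Fin d → ℕ) : Set (EuclideanSpace ℝ (Fin (d + 1))) :=
  {y | (∀ i : Fin d, -2 ≤ y i.castSucc ∧ y i.castSucc ≤ 2) ∧
    (1 ≤ y (Fin.last d) ∧ y (Fin.last d) ≤ 1) ∧
    (0 ≤ 2 * ∑ i, (α i : ℝ) * y i.castSucc ∧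
      2 * ∑ i, (α i : ℝ) * y i.castSucc ≤ 1)}

/-- `P := P_n ∩ ⋂ᵢ P_i`. -/
def polyP (d : ℕ) (α : Fin d → ℕ) : Set (EuclideanSpace ℝ (Fin (d + 1))) :=
  slabPn d α ∩ ⋂ i : Fin d, brickP d i

/-- `v` is a mixed vertex of `P`: a vertex (extreme point) of `P` lying, for each
`i ∈ [n]`, in a facet-defining hyperplane of `P_i` (for `i ≤ n-1` one of
`H(eᵢ,±1)`, `H(eⱼ,±2)`; for `P_n` one of its defining hyperplanes). -/
def IsMixedVertex (d : ℕ) (α : Fin d → ℕ)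
    (v : EuclideanSpace ℝ (Fin (d + 1))) : Prop :=
  v ∈ Set.extremePoints ℝ (polyP d α) ∧
    (∀ i : Fin d,
      (v i.castSucc = 1 ∨ v i.castSucc = -1) ∨
        ∃ j : Fin (d + 1), j ≠ i.castSucc ∧ (v j = 2 ∨ v j = -2)) ∧
    ((∑ i, (α i : ℝ) * v i.castSucc = 0) ∨
      (2 * ∑ i, (α i : ℝ) * v i.castSucc = 1) ∨
      (∃ i : Fin d, v i.castSucc = 2 ∨ v i.castSucc = -2) ∨
      v (Fin.last d) = 1)

/-!
Every point of `P` lies in the cube `[-1, 1]^{d+1}`: the bricks bound the first `d` coordinates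
and the slab fixes the last one to `1`. So the brick facets at `±2` never meet `P`, a mixed vertex
lies in `{-1, 1}^d × {1}`, and then `α·x` is an integer in `[0, 1/2]`, hence `0`. Conversely, for a
solution `x` the point `(x, 1)` lies in `P` and is a vertex of the cube containing `P`, hence an
extreme point of `P`.
-/

open Set

theorem mem_extremePoints_setOf_forall_mem_Icc_iff {ι : Type*} {a b : ℝ} (hab : a ≤ b)
    {v : EuclideanSpace ℝ ι} :
    v ∈ extremePoints ℝ {y : EuclideanSpace ℝ ι | ∀ j, y j ∈ Icc a b} ↔
      ∀ j, v j = a ∨ v j = b := by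
  let e := WithLp.linearEquiv 2 ℝ (ι → ℝ)
  have hbox : {y : EuclideanSpace ℝ ι | ∀ j, y j ∈ Icc a b} =
      e.symm '' univ.pi fun _ ↦ Icc a b := by
    rw [LinearEquiv.image_symm_eq_preimage]; ext y; simp only [mem_preimage, mem_univ_pi]; rfl
  rw [hbox, ← image_extremePoints, extremePoints_pi, extremePoints_Icc hab,
    LinearEquiv.image_symm_eq_preimage]
  simp only [mem_preimage, mem_univ_pi, mem_insert_iff, mem_singleton_iff]; rfl

section PartitionReduction

variable {d : ℕ} {α : Fin d → ℕ}

theorem polyP_subset_cube :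
    polyP d α ⊆ {y : EuclideanSpace ℝ (Fin (d + 1)) | ∀ j, y j ∈ Icc (-1) 1} := by
  rintro y ⟨⟨-, ⟨hlast₁, hlast₂⟩, -⟩, hbricks⟩ j
  induction j using Fin.lastCases with
  | last => exact ⟨by linarith, hlast₂⟩
  | cast i => exact (mem_iInter.1 hbricks i).1

theorem eq_one_or_eq_neg_one_of_isMixedVertex {v : EuclideanSpace ℝ (Fin (d + 1))}
    (hv : v ∈ polyP d α) (hmix : IsMixedVertex d α v) (i : Fin d) :
    v i.castSucc = 1 ∨ v i.castSucc = -1 := by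
  refine (hmix.2.1 i).resolve_right ?_
  rintro ⟨j, -, hj⟩
  have := polyP_subset_cube hv j
  rcases hj with hj | hj <;> rw [hj] at this <;> norm_num at this

theorem exists_partition_of_isMixedVertex {v : EuclideanSpace ℝ (Fin (d + 1))}
    (hv : v ∈ polyP d α) (hmix : IsMixedVertex d α v) :
    ∃ x : Fin d → ℤ, (∀ i, x i = 1 ∨ x i = -1) ∧ ∑ i, (α i : ℤ) * x i = 0 := by
  have hsigns : ∀ i : Fin d, ∃ z : ℤ, (z = 1 ∨ z = -1) ∧ (z : ℝ) = v i.castSucc := fun i ↦ by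
    rcases eq_one_or_eq_neg_one_of_isMixedVertex hv hmix i with h | h
    · exact ⟨1, .inl rfl, by simp [h]⟩
    · exact ⟨-1, .inr rfl, by simp [h]⟩
  choose x hx hxv using hsigns
  refine ⟨x, hx, ?_⟩
  have hcast : ((∑ i, (α i : ℤ) * x i : ℤ) : ℝ) = ∑ i, (α i : ℝ) * v i.castSucc := by
    push_cast; simp only [hxv]
  obtain ⟨-, -, hlo, hhi⟩ := hv.1
  rw [← hcast] at hlo hhi
  have hlo' : 0 ≤ 2 * ∑ i, (α i : ℤ) * x i := by exact_mod_cast hlo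
  have hhi' : 2 * ∑ i, (α i : ℤ) * x i ≤ 1 := by exact_mod_cast hhi
  omega

def partitionPoint (x : Fin d → ℤ) : EuclideanSpace ℝ (Fin (d + 1)) :=
  WithLp.toLp 2 (Fin.lastCases 1 fun i ↦ (x i : ℝ))

@[simp]
theorem partitionPoint_castSucc (x : Fin d → ℤ) (i : Fin d) :
    partitionPoint x i.castSucc = x i := by
  simp [partitionPoint]

@[simp]
theorem partitionPoint_last (x : Fin d → ℤ) : partitionPoint x (Fin.last d) = 1 := by
  simp [partitionPoint]

theorem partitionPoint_eq_neg_one_or_eq_one {x : Fin d → ℤ} (hx : ∀ i, x i = 1 ∨ x i = -1)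
    (j : Fin (d + 1)) : partitionPoint x j = -1 ∨ partitionPoint x j = 1 := by
  induction j using Fin.lastCases with
  | last => simp
  | cast i => rcases hx i with h | h <;> simp [h]

theorem sum_mul_partitionPoint (x : Fin d → ℤ) :
    ∑ i, (α i : ℝ) * partitionPoint x i.castSucc = ((∑ i, (α i : ℤ) * x i : ℤ) : ℝ) := by
  simp

theorem partitionPoint_mem_polyP {x : Fin d → ℤ} (hx : ∀ i, x i = 1 ∨ x i = -1)
    (hsum : ∑ i, (α i : ℤ) * x i = 0) : partitionPoint x ∈ polyP d α := by
  have hbound : ∀ j, -1 ≤ partitionPoint x j ∧ partitionPoint x j ≤ 1 := fun j ↦ by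
    rcases partitionPoint_eq_neg_one_or_eq_one hx j with h | h <;> simp [h]
  refine ⟨⟨fun i ↦ ?_, by simp, by rw [sum_mul_partitionPoint, hsum]; norm_num⟩,
    mem_iInter.2 fun i ↦ ⟨hbound _, fun j _ ↦ ?_⟩⟩
  · constructor <;> linarith [hbound i.castSucc]
  · constructor <;> linarith [hbound j]

theorem isMixedVertex_partitionPoint {x : Fin d → ℤ} (hx : ∀ i, x i = 1 ∨ x i = -1)
    (hsum : ∑ i, (α i : ℤ) * x i = 0) : IsMixedVertex d α (partitionPoint x) := by
  have hcube : partitionPoint x ∈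
      extremePoints ℝ {y : EuclideanSpace ℝ (Fin (d + 1)) | ∀ j, y j ∈ Icc (-1) 1} :=
    (mem_extremePoints_setOf_forall_mem_Icc_iff (by norm_num)).2
      (partitionPoint_eq_neg_one_or_eq_one hx)
  refine ⟨inter_extremePoints_subset_extremePoints_of_subset polyP_subset_cube
      ⟨partitionPoint_mem_polyP hx hsum, hcube⟩,
    fun i ↦ .inl (partitionPoint_eq_neg_one_or_eq_one hx i.castSucc).symm, .inl ?_⟩
  rw [sum_mul_partitionPoint, hsum, Int.cast_zero]

end PartitionReduction

theorem mixed_vertex_iff_partition_general (d : ℕ) (α : Fin d → ℕ) :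
    (∃ v, v ∈ polyP d α ∧ IsMixedVertex d α v) ↔
      ∃ x : Fin d → ℤ, (∀ i, x i = 1 ∨ x i = -1) ∧ ∑ i, (α i : ℤ) * x i = 0 := by
  constructor
  · rintro ⟨v, hv, hmix⟩
    exact exists_partition_of_isMixedVertex hv hmix
  · rintro ⟨x, hx, hsum⟩
    exact ⟨partitionPoint x, partitionPoint_mem_polyP hx hsum, isMixedVertex_partitionPoint hx hsum⟩

/-- In the Partition reduction, `P = P_n ∩ ⋂ᵢ P_i` has a mixed vertex iff the
Partition instance `α` has a solution `x ∈ {-1,1}^d` with `α·x = 0`. -/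
theorem mixed_vertex_iff_partition (d : ℕ) (α : Fin d → ℕ) (hα : ∀ i, 0 < α i) :
    (∃ v, v ∈ polyP d α ∧ IsMixedVertex d α v) ↔
      ∃ x : Fin d → ℤ, (∀ i, x i = 1 ∨ x i = -1) ∧ ∑ i, (α i : ℤ) * x i = 0 :=
  mixed_vertex_iff_partition_general d α
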